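/- If Φ := φ · (φ̃)^{-1} admits an AP antisymmetric factorization Φ = ψ₋ e_{2λ} (ψ̃₋)^{-1}, where φ ∈ GAP, then φ admits an AP asymmetric factorization φ = ψ₋ e_λ φ_e with even factor φ_e = e_{−λ} ψ₋^{-1} φ; in particular φ_e satisfies φ_e(−x) = φ_e(x). -/

import Mathlib

open Filter Set

/-- `p` is a trigonometric polynomial with frequencies in `S`:
`p x = ∑ n, c n * exp (i * λ n * x)` with all `λ n ∈ S`. -/
def IsTrigPoly (S : Set ℝ) (p : ℝ → ℂ) : Prop :=
  ∃ (N : ℕ) (c : Fin N → ℂ) (lam : Fin N → ℝ), (∀ n, lam n ∈ S) ∧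
    ∀ x : ℝ, p x = ∑ n : Fin N, c n * Complex.exp (Complex.I * (lam n) * x)

/-- The uniform closure of the trigonometric polynomials with frequencies in `S`.
For `S = univ` this is the algebra `AP` of almost periodic functions, i.e. the smallest
closed subalgebra of `L^∞(ℝ)` containing all the exponentials `e_λ`, `λ ∈ ℝ`. -/
def APin (S : Set ℝ) : Set (ℝ → ℂ) :=
  {φ | ∃ p : ℕ → ℝ → ℂ, (∀ n, IsTrigPoly S (p n)) ∧ TendstoUniformly p φ atTop}

/-- The algebra `AP` of almost periodic functions. -/
def AP : Set (ℝ → ℂ) := APin Set.univ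

/-- `AP⁻`: the closed subalgebra generated by the exponentials `e_λ` with `λ ≤ 0`. -/
def APminus : Set (ℝ → ℂ) := APin (Set.Iic 0)

/-- `AP⁺`: the closed subalgebra generated by the exponentials `e_λ` with `λ ≥ 0`. -/
def APplus : Set (ℝ → ℂ) := APin (Set.Ici 0)

/-- `GAP`: the group of invertible elements of the algebra `AP`. -/
def GAP : Set (ℝ → ℂ) := {φ | φ ∈ AP ∧ ∃ ψ ∈ AP, ∀ x, φ x * ψ x = 1}

/-- `GAP⁻`: the group of invertible elements of the algebra `AP⁻`. -/
def GAPminus : Set (ℝ → ℂ) := {φ | φ ∈ APminus ∧ ∃ ψ ∈ APminus, ∀ x, φ x * ψ x = 1}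

/-- `GAP⁺`: the group of invertible elements of the algebra `AP⁺`. -/
def GAPplus : Set (ℝ → ℂ) := {φ | φ ∈ APplus ∧ ∃ ψ ∈ APplus, ∀ x, φ x * ψ x = 1}

/-- Boundedness of a function `ℝ → ℂ`. -/
def IsBdd (φ : ℝ → ℂ) : Prop := ∃ C : ℝ, ∀ x, ‖φ x‖ ≤ C

/-- `GL^∞(ℝ)`: bounded functions which are invertible with bounded inverse. -/
def GLinf : Set (ℝ → ℂ) := {φ | IsBdd φ ∧ ∃ ψ, IsBdd ψ ∧ ∀ x, φ x * ψ x = 1}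

/-- `φ = φ₋ e_λ φ_e` is an AP asymmetric factorization of `φ`:
`φ₋ ∈ GAP⁻`, `φ_e ∈ GL^∞(ℝ)` even. -/
def IsAPAsymFactorization (φ φm : ℝ → ℂ) (l : ℝ) (φe : ℝ → ℂ) : Prop :=
  φm ∈ GAPminus ∧ φe ∈ GLinf ∧ (∀ x, φe (-x) = φe x) ∧
    ∀ x : ℝ, φ x = φm x * Complex.exp (Complex.I * l * x) * φe x

/-- `Φ = ψ₋ e_{2λ} (ψ̃₋)⁻¹` is an AP antisymmetric factorization of `Φ`: `ψ₋ ∈ GAP⁻`. -/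
def IsAPAntisymFactorization (Φ ψm : ℝ → ℂ) (l : ℝ) : Prop :=
  ψm ∈ GAPminus ∧
    ∀ x : ℝ, Φ x = ψm x * Complex.exp (Complex.I * (2 * l) * x) * (ψm (-x))⁻¹

/-!
The candidate even factor is `φ_e = e_{-λ} ψ₋⁻¹ φ`, so `φ = ψ₋ e_λ φ_e` holds by construction, and
`φ_e` lies in `GL^∞` because AP functions are bounded (uniform limits of trigonometric polynomials)
and the factors `e_{-λ}`, `ψ₋⁻¹`, `φ` are invertible there. Evenness is the antisymmetric
factorization rewritten: `φ / φ̃ = ψ₋ e_{2λ} / ψ̃₋` says exactly `e_{-λ} φ / ψ₋ = e_λ φ̃ / ψ̃₋`.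
-/

open Complex

lemma IsTrigPoly.isBdd {S : Set ℝ} {p : ℝ → ℂ} (hp : IsTrigPoly S p) : IsBdd p := by
  obtain ⟨N, c, lam, -, hp⟩ := hp
  refine ⟨∑ n, ‖c n‖, fun x => ?_⟩
  rw [hp]
  refine (norm_sum_le _ _).trans (Finset.sum_le_sum fun n _ => ?_)
  rw [norm_mul, norm_exp]
  simp

lemma IsBdd.of_tendstoUniformly {p : ℕ → ℝ → ℂ} {φ : ℝ → ℂ} (hp : ∀ n, IsBdd (p n))
    (hlim : TendstoUniformly p φ atTop) : IsBdd φ := by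
  obtain ⟨n, hn⟩ := ((Metric.tendstoUniformly_iff.mp hlim) 1 one_pos).exists
  obtain ⟨C, hC⟩ := hp n
  refine ⟨C + 1, fun x => ?_⟩
  calc ‖φ x‖ ≤ ‖p n x‖ + ‖φ x - p n x‖ := norm_le_insert' _ _
    _ ≤ C + 1 := add_le_add (hC x) (by simpa [dist_eq_norm] using (hn x).le)

lemma isBdd_of_mem_APin {S : Set ℝ} {φ : ℝ → ℂ} (hφ : φ ∈ APin S) : IsBdd φ :=
  let ⟨_, hp, hlim⟩ := hφ
  IsBdd.of_tendstoUniformly (fun n => (hp n).isBdd) hlim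

lemma IsBdd.mul {φ ψ : ℝ → ℂ} (hφ : IsBdd φ) (hψ : IsBdd ψ) : IsBdd fun x => φ x * ψ x := by
  obtain ⟨C, hC⟩ := hφ
  obtain ⟨D, hD⟩ := hψ
  refine ⟨C * D, fun x => ?_⟩
  rw [norm_mul]
  exact mul_le_mul (hC x) (hD x) (norm_nonneg _) ((norm_nonneg _).trans (hC x))

lemma mem_GLinf_of_mem_APin {S : Set ℝ} {φ ψ : ℝ → ℂ} (hφ : φ ∈ APin S) (hψ : ψ ∈ APin S)
    (hφψ : ∀ x, φ x * ψ x = 1) : φ ∈ GLinf :=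
  ⟨isBdd_of_mem_APin hφ, ψ, isBdd_of_mem_APin hψ, hφψ⟩

lemma ne_zero_of_mem_GLinf {φ : ℝ → ℂ} (hφ : φ ∈ GLinf) (x : ℝ) : φ x ≠ 0 :=
  let ⟨_, _, _, hφψ⟩ := hφ
  left_ne_zero_of_mul_eq_one (hφψ x)

lemma mul_mem_GLinf {φ ψ : ℝ → ℂ} (hφ : φ ∈ GLinf) (hψ : ψ ∈ GLinf) :
    (fun x => φ x * ψ x) ∈ GLinf := by
  obtain ⟨hφb, φ', hφ'b, hφφ'⟩ := hφ
  obtain ⟨hψb, ψ', hψ'b, hψψ'⟩ := hψ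
  refine ⟨hφb.mul hψb, fun x => φ' x * ψ' x, hφ'b.mul hψ'b, fun x => ?_⟩
  linear_combination (φ x * φ' x) * hψψ' x + hφφ' x

lemma inv_mem_GLinf {φ : ℝ → ℂ} (hφ : φ ∈ GLinf) : (fun x => (φ x)⁻¹) ∈ GLinf := by
  obtain ⟨hφb, ψ, hψb, hφψ⟩ := hφ
  have hψ : ∀ x, (φ x)⁻¹ = ψ x := fun x => inv_eq_of_mul_eq_one_right (hφψ x)
  simp only [hψ]
  exact ⟨hψb, φ, hφb, fun x => by rw [mul_comm, hφψ]⟩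

lemma cexp_mem_GLinf {f : ℝ → ℂ} (hf : ∃ C, ∀ x, |(f x).re| ≤ C) :
    (fun x => exp (f x)) ∈ GLinf := by
  obtain ⟨C, hC⟩ := hf
  refine ⟨⟨Real.exp C, fun x => ?_⟩, fun x => exp (-f x), ⟨Real.exp C, fun x => ?_⟩,
    fun x => by rw [← exp_add, add_neg_cancel, exp_zero]⟩
  · rw [norm_exp, Real.exp_le_exp]
    exact (le_abs_self _).trans (hC x)
  · rw [norm_exp, Real.exp_le_exp, neg_re]
    exact (neg_le_abs _).trans (hC x)

lemma IsAPAntisymFactorization.evenFactor_neg {φ ψm : ℝ → ℂ} {l : ℝ}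
    (h : IsAPAntisymFactorization (fun x => φ x * (φ (-x))⁻¹) ψm l) (x : ℝ) :
    exp (-(I * l * ↑(-x))) * (ψm (-x))⁻¹ * φ (-x) = exp (-(I * l * x)) * (ψm x)⁻¹ * φ x := by
  obtain ⟨⟨hψmAP, ψ, hψAP, hψmψ⟩, hΦ⟩ := h
  have hψm : ∀ y, ψm y ≠ 0 := ne_zero_of_mem_GLinf (mem_GLinf_of_mem_APin hψmAP hψAP hψmψ)
  set E := exp (I * l * x)
  have hΦx : φ x * (φ (-x))⁻¹ = ψm x * (E * E) * (ψm (-x))⁻¹ := by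
    refine (hΦ x).trans ?_
    rw [← exp_add]
    ring_nf
  -- `φ (-x) = 0` would make the left side the junk value `φ x * 0⁻¹ = 0`; the right side is nonzero
  have hφ : φ (-x) ≠ 0 := by
    rintro h0
    rw [h0, inv_zero, mul_zero] at hΦx
    exact (mul_ne_zero (mul_ne_zero (hψm x) (mul_ne_zero (exp_ne_zero _) (exp_ne_zero _)))
      (inv_ne_zero (hψm (-x)))) hΦx.symm
  have hE0 : E ≠ 0 := exp_ne_zero _
  have hE : exp (-(I * l * x)) = E⁻¹ := exp_neg _
  have hE' : exp (-(I * l * ↑(-x))) = E := by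
    rw [ofReal_neg, mul_neg, neg_neg]
  rw [hE, hE']
  field_simp [hψm x, hψm (-x), hφ, hE0] at hΦx ⊢
  linear_combination -hΦx

/-- If `Φ = φ ⋅ (φ̃)⁻¹` admits an AP antisymmetric factorization `Φ = ψ₋ e_{2λ} (ψ̃₋)⁻¹`,
with `φ ∈ GAP`, then `φ` admits an AP asymmetric factorization `φ = ψ₋ e_λ φ_e` with the
even factor `φ_e = e_{-λ} ψ₋⁻¹ φ`. -/
theorem apAsymFactorization_of_apAntisymFactorization (φ ψm : ℝ → ℂ) (l : ℝ)
    (hφ : φ ∈ GAP)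
    (h : IsAPAntisymFactorization (fun x => φ x * (φ (-x))⁻¹) ψm l) :
    IsAPAsymFactorization φ ψm l
      (fun x => Complex.exp (-(Complex.I * l * x)) * (ψm x)⁻¹ * φ x) := by
  obtain ⟨hφAP, χ, hχAP, hφχ⟩ := hφ
  have hψm : ψm ∈ GLinf :=
    let ⟨hψmAP, ψ, hψAP, hψmψ⟩ := h.1
    mem_GLinf_of_mem_APin hψmAP hψAP hψmψ
  have hexp : (fun x : ℝ => exp (-(I * l * x))) ∈ GLinf :=
    cexp_mem_GLinf ⟨0, fun x => by simp⟩
  have hφ : φ ∈ GLinf := mem_GLinf_of_mem_APin hφAP hχAP hφχ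
  refine ⟨h.1, mul_mem_GLinf (mul_mem_GLinf hexp (inv_mem_GLinf hψm)) hφ, h.evenFactor_neg,
    fun x => ?_⟩
  simp only [exp_neg]
  field_simp [ne_zero_of_mem_GLinf hψm x, exp_ne_zero]
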